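/- arXiv:2002.01251 — 7 statements merged into one kernel-verified Lean document; each statement's English description precedes it below -/
import Mathlib

section
/- If d is a metric on the strategy universe U, α ≤ 1/2, and aggr is a feasible aggregation function, then for every agent i and every state x, the aggregated strategy aggr_i(x_{-i}) is a best response of agent i to x_{-i}; i.e., for every strategy y ∈ Z, α·d(aggr_i(x_{-i}), s_i) ≤ α·d(y, s_i) + (1−α)·d(y, aggr_i(x_{-i})). Moreover, if α < 1/2, it is the unique best response. -/
/-!
The aggregate `b := aggr i x` does not depend on agent `i`'s own strategy, so playing `y`
costs `α d(s, y) + (1 - α) d(y, b)` while playing `b` costs `α d(s, b)`. By the triangle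
inequality `α d(s, b) ≤ α d(s, y) + α d(y, b)`, and `α ≤ 1 - α` when `α ≤ 1/2`, strictly
so when `α < 1/2`, which gives uniqueness as soon as `y ≠ b`.
-/

noncomputable def prefCost {U : Type*} [MetricSpace U] {ι : Type*} (α : ℝ)
    (s : ι → U) (aggr : ι → (ι → U) → U) (i : ι) (z : ι → U) : ℝ :=
  α * dist (s i) (z i) + (1 - α) * dist (z i) (aggr i z)

section Metric

variable {U : Type*} {α : ℝ}

theorem mul_dist_le_mul_dist_add_one_sub_mul_dist [PseudoMetricSpace U] (hα0 : 0 ≤ α)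
    (hα : α ≤ 1 / 2) (a b c : U) : α * dist a b ≤ α * dist a c + (1 - α) * dist c b :=
  calc α * dist a b ≤ α * (dist a c + dist c b) := by gcongr; exact dist_triangle a c b
    _ = α * dist a c + α * dist c b := mul_add _ _ _
    _ ≤ α * dist a c + (1 - α) * dist c b := by gcongr; linarith

theorem mul_dist_lt_mul_dist_add_one_sub_mul_dist [MetricSpace U] (hα0 : 0 ≤ α)
    (hα : α < 1 / 2) (a b : U) {c : U} (hcb : c ≠ b) : α * dist a b < α * dist a c + (1 - α) * dist c b :=
  calc α * dist a b ≤ α * (dist a c + dist c b) := by gcongr; exact dist_triangle a c b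
    _ = α * dist a c + α * dist c b := mul_add _ _ _
    _ < α * dist a c + (1 - α) * dist c b := by
      gcongr
      · exact dist_pos.mpr hcb
      · linarith

end Metric

section PrefCost

variable {U : Type*} {ι : Type*} [DecidableEq ι] {aggr : ι → (ι → U) → U} {i : ι}

theorem aggr_update_eq (hindep : ∀ x y : ι → U, (∀ j, j ≠ i → x j = y j) → aggr i x = aggr i y)
    (x : ι → U) (y : U) : aggr i (Function.update x i y) = aggr i x :=
  hindep _ _ fun _ hj => Function.update_of_ne hj y x

variable [MetricSpace U] {s : ι → U}

theorem prefCost_update (α : ℝ)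
    (hindep : ∀ x y : ι → U, (∀ j, j ≠ i → x j = y j) → aggr i x = aggr i y)
    (x : ι → U) (y : U) :
    prefCost α s aggr i (Function.update x i y)
      = α * dist (s i) y + (1 - α) * dist y (aggr i x) := by
  rw [prefCost, aggr_update_eq hindep, Function.update_self]

theorem prefCost_update_aggr (α : ℝ)
    (hindep : ∀ x y : ι → U, (∀ j, j ≠ i → x j = y j) → aggr i x = aggr i y)
    (x : ι → U) :
    prefCost α s aggr i (Function.update x i (aggr i x)) = α * dist (s i) (aggr i x) := by
  rw [prefCost_update α hindep, dist_self, mul_zero, add_zero]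

end PrefCost

theorem stmt_0_general {U : Type*} [MetricSpace U] {ι : Type*} [DecidableEq ι]
    (Z : Set U) (s : ι → U) (aggr : ι → (ι → U) → U) (α : ℝ)
    (hα0 : 0 ≤ α)
    (hindep : ∀ i (x y : ι → U), (∀ j, j ≠ i → x j = y j) → aggr i x = aggr i y)
    (i : ι) (x : ι → U) :
    (α ≤ 1/2 → ∀ y ∈ Z,
      prefCost α s aggr i (Function.update x i (aggr i x))
        ≤ prefCost α s aggr i (Function.update x i y)) ∧
    (α < 1/2 → ∀ y ∈ Z, y ≠ aggr i x →
      prefCost α s aggr i (Function.update x i (aggr i x))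
        < prefCost α s aggr i (Function.update x i y)) := by
  rw [prefCost_update_aggr α (hindep i)]
  refine ⟨fun hα y _ => ?_, fun hα y _ hy => ?_⟩
  · rw [prefCost_update α (hindep i)]
    exact mul_dist_le_mul_dist_add_one_sub_mul_dist hα0 hα _ _ _
  · rw [prefCost_update α (hindep i)]
    exact mul_dist_lt_mul_dist_add_one_sub_mul_dist hα0 hα _ _ hy

/-- if `α ≤ 1/2`, the aggregate `aggr i x` is a best response of agent `i`
to state `x`; if `α < 1/2`, it is the unique best response. -/
theorem stmt_0 {U : Type*} [MetricSpace U] {ι : Type*} [DecidableEq ι]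
    (Z : Set U) (s : ι → U) (aggr : ι → (ι → U) → U) (α : ℝ)
    (hα0 : 0 ≤ α)
    (haggrZ : ∀ i x, aggr i x ∈ Z)
    (hindep : ∀ i (x y : ι → U), (∀ j, j ≠ i → x j = y j) → aggr i x = aggr i y)
    (i : ι) (x : ι → U) :
    (α ≤ 1/2 → ∀ y ∈ Z,
      prefCost α s aggr i (Function.update x i (aggr i x))
        ≤ prefCost α s aggr i (Function.update x i y)) ∧
    (α < 1/2 → ∀ y ∈ Z, y ≠ aggr i x →
      prefCost α s aggr i (Function.update x i (aggr i x))
        < prefCost α s aggr i (Function.update x i y)) :=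
  stmt_0_general Z s aggr α hα0 hindep i x
end

section
/- If d is a metric on U, α ≥ 1/2, and agent i has preferred strategy s_i ∈ Z, then s_i is a dominant strategy for agent i: for every state x with x(i) arbitrary, c_i([x_{-i}, s_i]) ≤ c_i(x). Moreover, if α > 1/2, s_i is the unique (strictly) dominant strategy, i.e., the inequality is strict whenever x(i) ≠ s_i. -/
section WeightedTriangle

variable {U : Type*} [PseudoMetricSpace U] {α : ℝ}

theorem one_sub_mul_dist_le_of_half_le (hα : 1 / 2 ≤ α) (hα1 : α ≤ 1) (a b c : U) :
    (1 - α) * dist a c ≤ α * dist a b + (1 - α) * dist b c := by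
  calc (1 - α) * dist a c
      ≤ (1 - α) * (dist a b + dist b c) :=
        mul_le_mul_of_nonneg_left (dist_triangle a b c) (by linarith)
    _ ≤ α * dist a b + (1 - α) * dist b c := by nlinarith [dist_nonneg (x := a) (y := b)]

theorem one_sub_mul_dist_lt_of_half_lt (hα : 1 / 2 < α) (hα1 : α ≤ 1) {a b : U}
    (hab : 0 < dist a b) (c : U) :
    (1 - α) * dist a c < α * dist a b + (1 - α) * dist b c := by
  calc (1 - α) * dist a c
      ≤ (1 - α) * (dist a b + dist b c) :=
        mul_le_mul_of_nonneg_left (dist_triangle a b c) (by linarith)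
    _ < α * dist a b + (1 - α) * dist b c := by nlinarith

end WeightedTriangle

theorem prefCost_update_self {U : Type*} [MetricSpace U] {ι : Type*} [DecidableEq ι]
    (α : ℝ) (s : ι → U) (aggr : ι → (ι → U) → U) (i : ι)
    (hindep : ∀ x y : ι → U, (∀ j, j ≠ i → x j = y j) → aggr i x = aggr i y) (x : ι → U) :
    prefCost α s aggr i (Function.update x i (s i)) = (1 - α) * dist (s i) (aggr i x) := by
  have haggr : aggr i (Function.update x i (s i)) = aggr i x :=
    hindep _ _ fun j hj => Function.update_of_ne hj _ _
  simp [prefCost, haggr]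

theorem stmt_1_general {U : Type*} [MetricSpace U] {ι : Type*} [DecidableEq ι]
    (s : ι → U) (aggr : ι → (ι → U) → U) (α : ℝ)
    (hα1 : α ≤ 1)
    (hindep : ∀ i (x y : ι → U), (∀ j, j ≠ i → x j = y j) → aggr i x = aggr i y)
    (i : ι) :
    (1/2 ≤ α → ∀ x : ι → U,
      prefCost α s aggr i (Function.update x i (s i)) ≤ prefCost α s aggr i x) ∧
    (1/2 < α → ∀ x : ι → U, x i ≠ s i →
      prefCost α s aggr i (Function.update x i (s i)) < prefCost α s aggr i x) := by
  refine ⟨fun hα x => ?_, fun hα x hx => ?_⟩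
  · rw [prefCost_update_self α s aggr i (hindep i) x]
    exact one_sub_mul_dist_le_of_half_le hα hα1 _ _ _
  · rw [prefCost_update_self α s aggr i (hindep i) x]
    exact one_sub_mul_dist_lt_of_half_lt hα hα1 (dist_pos.mpr (Ne.symm hx)) _

/-- if `α ≥ 1/2` and `s i ∈ Z`, then `s i` is a dominant strategy of agent `i`;
if `α > 1/2`, it is strictly dominant. -/
theorem stmt_1 {U : Type*} [MetricSpace U] {ι : Type*} [DecidableEq ι]
    (Z : Set U) (s : ι → U) (aggr : ι → (ι → U) → U) (α : ℝ)
    (hα1 : α ≤ 1)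
    (haggrZ : ∀ i x, aggr i x ∈ Z)
    (hindep : ∀ i (x y : ι → U), (∀ j, j ≠ i → x j = y j) → aggr i x = aggr i y)
    (i : ι) (hsZ : s i ∈ Z) :
    (1/2 ≤ α → ∀ x : ι → U,
      prefCost α s aggr i (Function.update x i (s i)) ≤ prefCost α s aggr i x) ∧
    (1/2 < α → ∀ x : ι → U, x i ≠ s i →
      prefCost α s aggr i (Function.update x i (s i)) < prefCost α s aggr i x) :=
  stmt_1_general s aggr α hα1 hindep i
end

section
/- For every agent i, every pure Nash equilibrium e and every state z, c_i(e) ≤ c_i(z) + τ_i·(1−α)·Δ_i(z, e), where Δ_i(z, e) = Σ_{j≠i} w_{ij}·d(z(j), e(j)) is the relative distance and τ_i is the stretch of agent i satisfying d(aggr_i(z_{-i}), aggr_i(e_{-i})) ≤ τ_i·Δ_i(z, e). -/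
/-!
Deviating unilaterally from the equilibrium `e` to the strategy `z i` leaves agent `i`'s
aggregate at `aggr i e`, so by the equilibrium condition and the triangle inequality
`c_i(e) ≤ c_i(z) + (1 - α) d(aggr_i z, aggr_i e)`; the stretch bounds the last distance.
-/

open Finset

theorem prefCost_update_le {U : Type*} [MetricSpace U] {ι : Type*} [DecidableEq ι]
    {α : ℝ} (hα1 : α ≤ 1) (s : ι → U) {aggr : ι → (ι → U) → U} {i : ι}
    (hindep : ∀ x y : ι → U, (∀ j, j ≠ i → x j = y j) → aggr i x = aggr i y) (e z : ι → U) :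
    prefCost α s aggr i (Function.update e i (z i))
      ≤ prefCost α s aggr i z + (1 - α) * dist (aggr i z) (aggr i e) := by
  have haggr : aggr i (Function.update e i (z i)) = aggr i e :=
    hindep _ _ fun j hj => Function.update_of_ne hj _ _
  have htri : dist (z i) (aggr i e) ≤ dist (z i) (aggr i z) + dist (aggr i z) (aggr i e) :=
    dist_triangle _ _ _
  have h1α : 0 ≤ 1 - α := sub_nonneg.mpr hα1
  simp only [prefCost, Function.update_self, haggr]
  linarith [mul_le_mul_of_nonneg_left htri h1α]

theorem stmt_5_general {U : Type*} [MetricSpace U] {ι : Type*} [Fintype ι] [DecidableEq ι]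
    (Z : Set U) (s : ι → U) (aggr : ι → (ι → U) → U) (w : ι → ι → ℝ)
    (α : ℝ) (hα1 : α ≤ 1)
    (hindep : ∀ i (x y : ι → U), (∀ j, j ≠ i → x j = y j) → aggr i x = aggr i y)
    (e z : ι → U) (hzZ : ∀ i, z i ∈ Z)
    (heq : ∀ i, ∀ y ∈ Z, prefCost α s aggr i e ≤ prefCost α s aggr i (Function.update e i y))
    (i : ι) (τi : ℝ)
    (hτ : dist (aggr i z) (aggr i e)
        ≤ τi * ∑ j ∈ Finset.univ.erase i, w i j * dist (z j) (e j)) :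
    prefCost α s aggr i e ≤ prefCost α s aggr i z
      + τi * (1 - α) * ∑ j ∈ Finset.univ.erase i, w i j * dist (z j) (e j) := by
  have hshift := mul_le_mul_of_nonneg_left hτ (sub_nonneg.mpr hα1)
  calc prefCost α s aggr i e ≤ prefCost α s aggr i (Function.update e i (z i)) :=
        heq i (z i) (hzZ i)
    _ ≤ prefCost α s aggr i z + (1 - α) * dist (aggr i z) (aggr i e) :=
        prefCost_update_le hα1 s (hindep i) e z
    _ ≤ _ := by linarith

/-- for every agent `i`, equilibrium `e` and state `z`,
`c_i(e) ≤ c_i(z) + τ_i (1-α) Δ_i(z,e)`. -/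
theorem stmt_5 {U : Type*} [MetricSpace U] {ι : Type*} [Fintype ι] [DecidableEq ι]
    (Z : Set U) (s : ι → U) (aggr : ι → (ι → U) → U) (w : ι → ι → ℝ)
    (α : ℝ) (hα0 : 0 ≤ α) (hα1 : α ≤ 1)
    (haggrZ : ∀ i x, aggr i x ∈ Z)
    (hindep : ∀ i (x y : ι → U), (∀ j, j ≠ i → x j = y j) → aggr i x = aggr i y)
    (e z : ι → U) (heZ : ∀ i, e i ∈ Z) (hzZ : ∀ i, z i ∈ Z)
    (heq : ∀ i, ∀ y ∈ Z, prefCost α s aggr i e ≤ prefCost α s aggr i (Function.update e i y))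
    (i : ι) (τi : ℝ) (hτ1 : 1 ≤ τi)
    (hτ : dist (aggr i z) (aggr i e)
        ≤ τi * ∑ j ∈ Finset.univ.erase i, w i j * dist (z j) (e j)) :
    prefCost α s aggr i e ≤ prefCost α s aggr i z
      + τi * (1 - α) * ∑ j ∈ Finset.univ.erase i, w i j * dist (z j) (e j) :=
  stmt_5_general Z s aggr w α hα1 hindep e z hzZ heq i τi hτ
end

section
/- In a preference game with local aggregation with α > 1/2: for every pure Nash equilibrium e and optimal state o with respect to the social cost SUM(z) = Σ_i c_i(z), SUM(e) ≤ SUM(o)·(1 + ((1−α)/α)·(δτ/β)), where δ is the global social impact, τ the global stretch, and β the global boundary (assuming SUM(o) > 0 and D(o,e) ≠ ∅). -/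
open Finset

/-!
Let `D = ∑ j, d(o j, e j)`. Deviating to `o i` does not help player `i` at the equilibrium `e`,
and the triangle inequality through `aggr i o` turns this into
`c_i(e) ≤ c_i(o) + (1 - α) d(aggr_i o, aggr_i e)`. Summing, stretch and social impact give
`SUM(e) ≤ SUM(o) + (1 - α) τ δ D`, while the boundary gives `α β D ≤ α ∑ j, d(s j, o j) ≤ SUM(o)`.
-/

theorem sum_sum_erase_mul_le_mul_sum {ι : Type*} [Fintype ι] [DecidableEq ι]
    {w : ι → ι → ℝ} {δ : ℝ} {d : ι → ℝ} (hw0 : ∀ i j, 0 ≤ w i j)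
    (hδ : ∀ j, ∑ i, w i j ≤ δ) (hd : ∀ j, 0 ≤ d j) :
    ∑ i, ∑ j ∈ univ.erase i, w i j * d j ≤ δ * ∑ j, d j :=
  calc ∑ i, ∑ j ∈ univ.erase i, w i j * d j
      ≤ ∑ i, ∑ j, w i j * d j := sum_le_sum fun i _ =>
        sum_le_sum_of_subset_of_nonneg (erase_subset _ _) fun j _ _ => mul_nonneg (hw0 i j) (hd j)
    _ = ∑ j, (∑ i, w i j) * d j := by rw [sum_comm]; simp only [sum_mul]
    _ ≤ ∑ j, δ * d j := sum_le_sum fun j _ => mul_le_mul_of_nonneg_right (hδ j) (hd j)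
    _ = δ * ∑ j, d j := (mul_sum _ _ _).symm

theorem sum_dist_aggr_le {U : Type*} [MetricSpace U] {ι : Type*} [Fintype ι] [DecidableEq ι]
    {aggr : ι → (ι → U) → U} {w : ι → ι → ℝ} {τ δ : ℝ} {e o : ι → U} (hτ0 : 0 ≤ τ)
    (hw0 : ∀ i j, 0 ≤ w i j) (hδ : ∀ j, ∑ i, w i j ≤ δ)
    (hτ : ∀ i, dist (aggr i o) (aggr i e) ≤ τ * ∑ j ∈ univ.erase i, w i j * dist (o j) (e j)) :
    ∑ i, dist (aggr i o) (aggr i e) ≤ τ * (δ * ∑ j, dist (o j) (e j)) :=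
  calc ∑ i, dist (aggr i o) (aggr i e)
      ≤ ∑ i, τ * ∑ j ∈ univ.erase i, w i j * dist (o j) (e j) := sum_le_sum fun i _ => hτ i
    _ = τ * ∑ i, ∑ j ∈ univ.erase i, w i j * dist (o j) (e j) := (mul_sum _ _ _).symm
    _ ≤ τ * (δ * ∑ j, dist (o j) (e j)) :=
        mul_le_mul_of_nonneg_left (sum_sum_erase_mul_le_mul_sum hw0 hδ fun _ => dist_nonneg) hτ0

section PrefCost

variable {U : Type*} [MetricSpace U] {ι : Type*} {α : ℝ} {s : ι → U} {aggr : ι → (ι → U) → U}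

theorem mul_dist_le_prefCost (hα1 : α ≤ 1) (i : ι) (z : ι → U) :
    α * dist (s i) (z i) ≤ prefCost α s aggr i z :=
  le_add_of_nonneg_right (mul_nonneg (sub_nonneg.2 hα1) dist_nonneg)

theorem prefCost_le_add_dist_aggr [DecidableEq ι] (hα1 : α ≤ 1) {e o : ι → U} {i : ι}
    (hagg : aggr i (Function.update e i (o i)) = aggr i e)
    (he : prefCost α s aggr i e ≤ prefCost α s aggr i (Function.update e i (o i))) :
    prefCost α s aggr i e ≤ prefCost α s aggr i o + (1 - α) * dist (aggr i o) (aggr i e) := by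
  have h1α : 0 ≤ 1 - α := sub_nonneg.2 hα1
  calc prefCost α s aggr i e
      ≤ prefCost α s aggr i (Function.update e i (o i)) := he
    _ = α * dist (s i) (o i) + (1 - α) * dist (o i) (aggr i e) := by
        simp only [prefCost, Function.update_self, hagg]
    _ ≤ α * dist (s i) (o i)
          + (1 - α) * (dist (o i) (aggr i o) + dist (aggr i o) (aggr i e)) := by
        gcongr
        exact dist_triangle _ _ _
    _ = prefCost α s aggr i o + (1 - α) * dist (aggr i o) (aggr i e) := by
        unfold prefCost; ring

theorem mul_sum_dist_le_sum_prefCost [Fintype ι] (hα0 : 0 ≤ α) (hα1 : α ≤ 1) {β : ℝ}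
    {e o : ι → U} (hβ : ∀ j, β * dist (o j) (e j) ≤ dist (o j) (s j)) :
    α * (β * ∑ j, dist (o j) (e j)) ≤ ∑ j, prefCost α s aggr j o := by
  rw [mul_sum, mul_sum]
  refine sum_le_sum fun j _ => ?_
  calc α * (β * dist (o j) (e j)) ≤ α * dist (s j) (o j) := by
        rw [dist_comm (s j)]; gcongr; exact hβ j
    _ ≤ prefCost α s aggr j o := mul_dist_le_prefCost hα1 j o

end PrefCost

theorem stmt_7_general {U : Type*} [MetricSpace U] {ι : Type*} [Fintype ι] [DecidableEq ι]
    (Z : Set U) (s : ι → U) (aggr : ι → (ι → U) → U) (w : ι → ι → ℝ)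
    (α τ β δ : ℝ) (hα : 1/2 < α) (hα1 : α ≤ 1)
    (hindep : ∀ i (x y : ι → U), (∀ j, j ≠ i → x j = y j) → aggr i x = aggr i y)
    (hw0 : ∀ i j, 0 ≤ w i j)
    -- `δ` is the global social impact
    (hδ : ∀ j, ∑ i, w i j ≤ δ)
    (e o : ι → U) (hoZ : ∀ i, o i ∈ Z)
    -- `e` is a pure Nash equilibrium
    (heq : ∀ i, ∀ y ∈ Z, prefCost α s aggr i e ≤ prefCost α s aggr i (Function.update e i y))
    -- `τ` is the global stretch
    (hτ1 : 1 ≤ τ)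
    (hτ : ∀ i, dist (aggr i o) (aggr i e)
        ≤ τ * ∑ j ∈ Finset.univ.erase i, w i j * dist (o j) (e j))
    -- `β` is the global boundary
    (hβ0 : 0 < β)
    (hβ : ∀ i, ∀ x ∈ Z, x ≠ e i → β * dist x (e i) ≤ dist x (s i))
    -- `D(o,e) ⊆ D(o,s)` and `D(o,e) ≠ ∅`, `SUM(o) > 0`
    (hDne : ∃ i, o i ≠ e i) :
    ∑ i, prefCost α s aggr i e
      ≤ (∑ i, prefCost α s aggr i o) * (1 + ((1 - α)/α) * (δ * τ / β)) := by
  obtain ⟨i₀, -⟩ := hDne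
  have hα0 : 0 < α := by linarith
  have h1α : 0 ≤ 1 - α := sub_nonneg.2 hα1
  have hτδ : 0 ≤ τ * δ := mul_nonneg (by linarith) ((sum_nonneg fun i _ => hw0 i i₀).trans (hδ i₀))
  set So := ∑ i, prefCost α s aggr i o
  set D := ∑ j, dist (o j) (e j)
  have hNash : ∑ i, prefCost α s aggr i e ≤ So + (1 - α) * ∑ i, dist (aggr i o) (aggr i e) := by
    rw [mul_sum, ← sum_add_distrib]
    refine sum_le_sum fun i _ => prefCost_le_add_dist_aggr hα1 ?_ (heq i (o i) (hoZ i))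
    exact hindep i _ _ fun j hj => Function.update_of_ne hj _ _
  have hStretch : ∑ i, dist (aggr i o) (aggr i e) ≤ τ * δ * D := by
    rw [mul_assoc]; exact sum_dist_aggr_le (by linarith) hw0 hδ hτ
  have hBoundary : D ≤ So / (α * β) := by
    rw [le_div_iff₀ (by positivity), mul_comm, mul_assoc]
    refine mul_sum_dist_le_sum_prefCost hα0.le hα1 fun j => ?_
    by_cases h : o j = e j
    · simp [h]
    · exact hβ j (o j) (hoZ j) h
  calc ∑ i, prefCost α s aggr i e ≤ So + (1 - α) * ∑ i, dist (aggr i o) (aggr i e) := hNash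
    _ ≤ So + (1 - α) * (τ * δ * (So / (α * β))) := by gcongr; exact hStretch.trans (by gcongr)
    _ = So * (1 + ((1 - α)/α) * (δ * τ / β)) := by field_simp

/-- if `α > 1/2`, then for every equilibrium `e` and optimal state `o`
(wrt. social cost SUM), `SUM(e) ≤ SUM(o) (1 + ((1-α)/α)(δτ/β))`. -/
theorem stmt_7 {U : Type*} [MetricSpace U] {ι : Type*} [Fintype ι] [DecidableEq ι]
    (Z : Set U) (s : ι → U) (aggr : ι → (ι → U) → U) (w : ι → ι → ℝ)
    (α τ β δ : ℝ) (hα : 1/2 < α) (hα1 : α ≤ 1)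
    (haggrZ : ∀ i x, aggr i x ∈ Z)
    (hindep : ∀ i (x y : ι → U), (∀ j, j ≠ i → x j = y j) → aggr i x = aggr i y)
    (hw0 : ∀ i j, 0 ≤ w i j) (hwii : ∀ i, w i i = 0) (hw1 : ∀ i, ∑ j, w i j = 1)
    -- `δ` is the global social impact
    (hδ : ∀ j, ∑ i, w i j ≤ δ)
    (e o : ι → U) (heZ : ∀ i, e i ∈ Z) (hoZ : ∀ i, o i ∈ Z)
    -- `e` is a pure Nash equilibrium
    (heq : ∀ i, ∀ y ∈ Z, prefCost α s aggr i e ≤ prefCost α s aggr i (Function.update e i y))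
    -- `o` is optimal wrt. SUM
    (hopt : ∀ z : ι → U, (∀ i, z i ∈ Z) →
      ∑ i, prefCost α s aggr i o ≤ ∑ i, prefCost α s aggr i z)
    -- `τ` is the global stretch
    (hτ1 : 1 ≤ τ)
    (hτ : ∀ i, dist (aggr i o) (aggr i e)
        ≤ τ * ∑ j ∈ Finset.univ.erase i, w i j * dist (o j) (e j))
    -- `β` is the global boundary
    (hβ0 : 0 < β)
    (hβ : ∀ i, ∀ x ∈ Z, x ≠ e i → β * dist x (e i) ≤ dist x (s i))
    -- `D(o,e) ⊆ D(o,s)` and `D(o,e) ≠ ∅`, `SUM(o) > 0`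
    (hDos : ∀ i, o i ≠ e i → o i ≠ s i)
    (hDne : ∃ i, o i ≠ e i)
    (hSUMo : 0 < ∑ i, prefCost α s aggr i o) :
    ∑ i, prefCost α s aggr i e
      ≤ (∑ i, prefCost α s aggr i o) * (1 + ((1 - α)/α) * (δ * τ / β)) :=
  stmt_7_general Z s aggr w α τ β δ hα hα1 hindep hw0 hδ e o hoZ heq hτ1 hτ hβ0 hβ hDne
end

section
/- Let the aggregation function be the Fréchet median: aggr_i(z_{-i}) minimizes Σ_{j≠i} w_{ij}·d(y, z(j)) over y ∈ Z, with d an exact metric on Z. If o is a consensus state (o(j) = aggr_i(o_{-i}) for all j ≠ i by unanimity), then for every state e and agent i, d(aggr_i(o_{-i}), aggr_i(e_{-i})) ≤ 2·Σ_{j≠i} w_{ij}·d(o(j), e(j)). -/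
open Finset

/-! A Fréchet median `y` of points `z j` is a minimizer of `∑ w j * dist · (z j)`. Averaging the
triangle inequality `dist x y ≤ dist x (z j) + dist y (z j)` against the weights and comparing the
cost of `y` with that of any competitor `x` gives `dist x y ≤ 2 ∑ w j * dist x (z j)`. At a
consensus the current median `x` is the common opinion, so `dist x (e j) = dist (o j) (e j)`. -/

section WeightedDistance

variable {U ι : Type*} [MetricSpace U] {s : Finset ι} {w : ι → ℝ}

theorem dist_le_sum_weighted_dist_add (hw0 : ∀ j ∈ s, 0 ≤ w j) (hw1 : ∑ j ∈ s, w j = 1)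
    (x y : U) (z : ι → U) :
    dist x y ≤ ∑ j ∈ s, w j * dist x (z j) + ∑ j ∈ s, w j * dist y (z j) := by
  calc dist x y = ∑ j ∈ s, w j * dist x y := by rw [← sum_mul, hw1, one_mul]
    _ ≤ ∑ j ∈ s, w j * (dist x (z j) + dist y (z j)) :=
        sum_le_sum fun j hj => mul_le_mul_of_nonneg_left (dist_triangle_right x y (z j)) (hw0 j hj)
    _ = ∑ j ∈ s, w j * dist x (z j) + ∑ j ∈ s, w j * dist y (z j) := by
        simp only [mul_add, sum_add_distrib]

theorem dist_le_two_mul_sum_of_weighted_dist_le (hw0 : ∀ j ∈ s, 0 ≤ w j)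
    (hw1 : ∑ j ∈ s, w j = 1) {x y : U} {z : ι → U}
    (hy : ∑ j ∈ s, w j * dist y (z j) ≤ ∑ j ∈ s, w j * dist x (z j)) :
    dist x y ≤ 2 * ∑ j ∈ s, w j * dist x (z j) := by
  linarith [dist_le_sum_weighted_dist_add hw0 hw1 x y z]

end WeightedDistance

theorem stmt_13_general {U : Type*} [MetricSpace U] {ι : Type*} [Fintype ι] [DecidableEq ι]
    (Z : Set U) (aggr : ι → (ι → U) → U) (w : ι → ι → ℝ)
    (hw0 : ∀ i j, 0 ≤ w i j)
    (hw1 : ∀ i, ∑ j ∈ Finset.univ.erase i, w i j = 1)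
    (haggrZ : ∀ i x, aggr i x ∈ Z)
    -- `aggr` is the Fréchet median: it minimizes the weighted sum of distances over `Z`
    (hmedian : ∀ i (z : ι → U), ∀ y ∈ Z,
      (∑ j ∈ Finset.univ.erase i, w i j * dist (aggr i z) (z j))
        ≤ ∑ j ∈ Finset.univ.erase i, w i j * dist y (z j))
    (i : ι) (o e : ι → U)
    -- `o` is a consensus (so by unanimity every coordinate equals `aggr i o`)
    (hcons : ∀ j, o j = aggr i o) :
    dist (aggr i o) (aggr i e)
      ≤ 2 * ∑ j ∈ Finset.univ.erase i, w i j * dist (o j) (e j) := by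
  have hbound := dist_le_two_mul_sum_of_weighted_dist_le (fun j _ => hw0 i j) (hw1 i)
    (hmedian i e (aggr i o) (haggrZ i o))
  have hdist : ∀ j, dist (aggr i o) (e j) = dist (o j) (e j) := fun j => by rw [← hcons j]
  simpa only [hdist] using hbound

/-- when the aggregation function is the Fréchet median and the state `o`
is a consensus, `d(aggr_i(o), aggr_i(e)) ≤ 2 Σ_{j≠i} w_{ij} d(o(j), e(j))`. -/
theorem stmt_13 {U : Type*} [MetricSpace U] {ι : Type*} [Fintype ι] [DecidableEq ι]
    (Z : Set U) (aggr : ι → (ι → U) → U) (w : ι → ι → ℝ)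
    (hw0 : ∀ i j, 0 ≤ w i j) (hwii : ∀ i, w i i = 0)
    (hw1 : ∀ i, ∑ j ∈ Finset.univ.erase i, w i j = 1)
    (haggrZ : ∀ i x, aggr i x ∈ Z)
    -- `aggr` is the Fréchet median: it minimizes the weighted sum of distances over `Z`
    (hmedian : ∀ i (z : ι → U), ∀ y ∈ Z,
      (∑ j ∈ Finset.univ.erase i, w i j * dist (aggr i z) (z j))
        ≤ ∑ j ∈ Finset.univ.erase i, w i j * dist y (z j))
    (i : ι) (o e : ι → U) (hoZ : ∀ j, o j ∈ Z) (heZ : ∀ j, e j ∈ Z)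
    -- `o` is a consensus (so by unanimity every coordinate equals `aggr i o`)
    (hcons : ∀ j, o j = aggr i o) :
    dist (aggr i o) (aggr i e)
      ≤ 2 * ∑ j ∈ Finset.univ.erase i, w i j * dist (o j) (e j) :=
  stmt_13_general Z aggr w hw0 hw1 haggrZ hmedian i o e hcons
end

section
/- In the k-approval voting game with α > 1/2: for every pure Nash equilibrium e, every agent i, and every strategy x ∈ Z with x ≠ e(i), d(x, s_i) ≥ ((2α−1)/(2α))²·d(x, e(i)), where d is the squared Euclidean distance; i.e., the global boundary β ≥ ((2α−1)/(2α))². -/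
open Finset

/-- Squared Euclidean distance on `Fin m → ℝ`. -/
def sqd {m : ℕ} (u v : Fin m → ℝ) : ℝ := ∑ ℓ, (u ℓ - v ℓ)^2

/-- Strategy space of the `k`-approval voting game: binary strings with `k` ones. -/
def Zvote (m k : ℕ) : Set (Fin m → ℝ) :=
  {u | (∀ ℓ, u ℓ = 0 ∨ u ℓ = 1) ∧ ∑ ℓ, u ℓ = k}

/-- Strategy universe of the `k`-approval voting game. -/
def Uvote (m k : ℕ) : Set (Fin m → ℝ) :=
  {u | (∀ ℓ, 0 ≤ u ℓ ∧ u ℓ ≤ 1) ∧ ∑ ℓ, u ℓ = k}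

/-- Cost of agent `i` in the `k`-approval voting game. -/
def voteCost {m : ℕ} {ι : Type*} (α : ℝ) (s : ι → Fin m → ℝ)
    (aggr : ι → (ι → Fin m → ℝ) → (Fin m → ℝ)) (i : ι) (z : ι → Fin m → ℝ) : ℝ :=
  α * sqd (s i) (z i) + (1 - α) * sqd (z i) (aggr i z)

/-!
Deviating from the equilibrium `e i` to `x` changes the aggregation term by at most `d(x, e i)`
(triangle inequality on `{0,1}^m`), which yields the linear constraint
`d(s_i, e_i) - d(s_i, x) ≤ (1 - 2β) d(x, e_i)` with `β = (2α-1)/(2α)`. Adding `β` times this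
constraint to `d(x, s_i) - β² d(x, e_i)` leaves, coordinatewise, a perfect square, so
`β² d(x, e_i) ≤ d(x, s_i)`.
-/

def IsBinary {m : ℕ} (u : Fin m → ℝ) : Prop := ∀ ℓ, u ℓ = 0 ∨ u ℓ = 1

lemma sqd_le_sqd_add_sqd_of_isBinary {m : ℕ} {u v w : Fin m → ℝ}
    (hu : IsBinary u) (hv : IsBinary v) (hw : IsBinary w) :
    sqd u w ≤ sqd u v + sqd v w := by
  rw [sqd, sqd, sqd, ← sum_add_distrib]
  refine sum_le_sum fun ℓ _ => ?_
  rcases hu ℓ with h₁ | h₁ <;> rcases hv ℓ with h₂ | h₂ <;> rcases hw ℓ with h₃ | h₃ <;>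
    norm_num [h₁, h₂, h₃]

lemma mul_sqd_sub_sqd_le_of_le_voteCost_update {m : ℕ} {ι : Type*} [DecidableEq ι]
    {s : ι → Fin m → ℝ} {aggr : ι → (ι → Fin m → ℝ) → (Fin m → ℝ)} {α : ℝ} (hα1 : α ≤ 1)
    {e : ι → Fin m → ℝ} {i : ι} {x : Fin m → ℝ}
    (hx : IsBinary x) (he : IsBinary (e i)) (ha : IsBinary (aggr i e))
    (haggr : aggr i (Function.update e i x) = aggr i e)
    (hcost : voteCost α s aggr i e ≤ voteCost α s aggr i (Function.update e i x)) :
    α * (sqd (s i) (e i) - sqd (s i) x) ≤ (1 - α) * sqd x (e i) := by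
  simp only [voteCost, Function.update_self, haggr] at hcost
  have htri := sqd_le_sqd_add_sqd_of_isBinary hx he ha
  nlinarith [mul_le_mul_of_nonneg_left htri (sub_nonneg.mpr hα1)]

/-- The multiplier `β` is the Lagrange multiplier of the convex program minimising
`d(x, s) / d(x, e)` over `s`; the slack is `(s - β)²` or `(1 - s - β)²`. -/
lemma sq_mul_sq_sub_le_of_binary {x e s β : ℝ} (hx : x = 0 ∨ x = 1) (he : e = 0 ∨ e = 1) :
    β ^ 2 * (x - e) ^ 2 ≤
      (x - s) ^ 2 + β * ((s - e) ^ 2 - (s - x) ^ 2 - (1 - 2 * β) * (x - e) ^ 2) := by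
  rcases hx with rfl | rfl <;> rcases he with rfl | rfl
  · nlinarith [sq_nonneg s]
  · nlinarith [sq_nonneg (s - β)]
  · nlinarith [sq_nonneg (1 - s - β)]
  · nlinarith [sq_nonneg (1 - s)]

lemma sq_mul_sqd_le_sqd_of_sqd_sub_sqd_le {m : ℕ} {x e s : Fin m → ℝ} {β : ℝ}
    (hx : IsBinary x) (he : IsBinary e) (hβ : 0 ≤ β)
    (h : sqd s e - sqd s x ≤ (1 - 2 * β) * sqd x e) :
    β ^ 2 * sqd x e ≤ sqd x s := by
  have hsum := sum_le_sum fun ℓ (_ : ℓ ∈ univ) =>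
    sq_mul_sq_sub_le_of_binary (s := s ℓ) (β := β) (hx ℓ) (he ℓ)
  simp only [← mul_sum, sum_add_distrib, sum_sub_distrib] at hsum
  have hslack : β * (sqd s e - sqd s x - (1 - 2 * β) * sqd x e) ≤ 0 :=
    mul_nonpos_of_nonneg_of_nonpos hβ (by linarith)
  unfold sqd at hslack ⊢
  linarith

theorem stmt_14_general {m k : ℕ} {ι : Type*} [DecidableEq ι]
    (s : ι → Fin m → ℝ) (aggr : ι → (ι → Fin m → ℝ) → (Fin m → ℝ))
    (α : ℝ) (hα : 1/2 < α) (hα1 : α ≤ 1)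
    (haggrZ : ∀ i x, aggr i x ∈ Zvote m k)
    (hindep : ∀ i (x y : ι → Fin m → ℝ), (∀ j, j ≠ i → x j = y j) → aggr i x = aggr i y)
    (e : ι → Fin m → ℝ) (heZ : ∀ i, e i ∈ Zvote m k)
    (heq : ∀ i, ∀ y ∈ Zvote m k,
      voteCost α s aggr i e ≤ voteCost α s aggr i (Function.update e i y)) :
    ∀ i, ∀ x ∈ Zvote m k, x ≠ e i →
      ((2*α - 1)/(2*α))^2 * sqd x (e i) ≤ sqd x (s i) := by
  intro i x hx _
  have hα0 : 0 < α := by linarith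
  have hdev := mul_sqd_sub_sqd_le_of_le_voteCost_update hα1 hx.1 (heZ i).1 (haggrZ i e).1
    (hindep i _ _ fun j hj => Function.update_of_ne hj x e) (heq i x hx)
  refine sq_mul_sqd_le_sqd_of_sqd_sub_sqd_le hx.1 (heZ i).1 (div_nonneg (by linarith) (by linarith)) ?_
  have hβ : 1 - 2 * ((2*α - 1)/(2*α)) = (1 - α) / α := by field_simp; ring
  rw [hβ, div_mul_eq_mul_div, le_div_iff₀ hα0]
  linarith

/-- in the `k`-approval voting game with `α > 1/2`, for every pure Nash
equilibrium `e`, agent `i`, and strategy `x ∈ Z` with `x ≠ e i`,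
`d(x, s_i) ≥ ((2α-1)/(2α))² d(x, e_i)`; i.e., the global boundary is at least
`((2α-1)/(2α))²`. -/
theorem stmt_14 {m k : ℕ} (hkm : k < m) {ι : Type*} [DecidableEq ι]
    (s : ι → Fin m → ℝ) (aggr : ι → (ι → Fin m → ℝ) → (Fin m → ℝ))
    (α : ℝ) (hα : 1/2 < α) (hα1 : α ≤ 1)
    (hsU : ∀ i, s i ∈ Uvote m k)
    (haggrZ : ∀ i x, aggr i x ∈ Zvote m k)
    (hindep : ∀ i (x y : ι → Fin m → ℝ), (∀ j, j ≠ i → x j = y j) → aggr i x = aggr i y)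
    (e : ι → Fin m → ℝ) (heZ : ∀ i, e i ∈ Zvote m k)
    (heq : ∀ i, ∀ y ∈ Zvote m k,
      voteCost α s aggr i e ≤ voteCost α s aggr i (Function.update e i y)) :
    ∀ i, ∀ x ∈ Zvote m k, x ≠ e i →
      ((2*α - 1)/(2*α))^2 * sqd x (e i) ≤ sqd x (s i) :=
  stmt_14_general s aggr α hα hα1 haggrZ hindep e heZ heq
end

section
/- For α ∈ (0, 1/2] and unanimous aggregation, there exist restricted instances (all s_i ∉ Z) where the price of anarchy is unbounded: with U = {a, b, s}, Z = {a, b}, s_i = s for all agents, and metric d with d(b, s) = ε > 0 and d(a,s) fixed, the consensus-on-a equilibrium has SUM = n·α·d(a,s) while the consensus-on-b state has SUM = n·α·ε, so the PoA ratio is at least d(a,s)/ε, which tends to infinity as ε → 0. -/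
/-!
At a consensus on `c` every aggregate is `c` by unanimity, so agent `i` pays `α d(sᵢ, c)`; a
deviation to `y` leaves the aggregate at `c` and costs `α d(sᵢ, y) + (1 - α) d(y, c)`, which is at
least `α d(sᵢ, c)` by the triangle inequality once `α ≤ 1 - α`. Hence every consensus is an
equilibrium when `α ≤ 1/2`. With all agents preferring `s = 2`, `d(2, 1) = ε` and `d(2, 0) = 1`,
the consensus on `0` costs `n α` in total while the consensus on `1` costs `n α ε`, and `ε` can be
taken arbitrarily small.
-/

open Finset

/-- Cost of an agent, for an arbitrary distance function `d`. -/
def gcost {U : Type*} {ι : Type*} (d : U → U → ℝ) (α : ℝ)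
    (s : ι → U) (aggr : ι → (ι → U) → U) (i : ι) (z : ι → U) : ℝ :=
  α * d (s i) (z i) + (1 - α) * d (z i) (aggr i z)

section Consensus

variable {U ι : Type*} {d : U → U → ℝ} {α : ℝ} {s : ι → U} {aggr : ι → (ι → U) → U} {c : U}

theorem gcost_const (hd : d c c = 0) (hc : ∀ i, aggr i (fun _ => c) = c) (i : ι) :
    gcost d α s aggr i (fun _ => c) = α * d (s i) c := by
  simp [gcost, hc, hd]

theorem sum_gcost_const [Fintype ι] (hd : d c c = 0) (hc : ∀ i, aggr i (fun _ => c) = c) :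
    ∑ i, gcost d α s aggr i (fun _ => c) = α * ∑ i, d (s i) c := by
  simp_rw [gcost_const hd hc, mul_sum]

theorem gcost_const_le_gcost_update [DecidableEq ι] (hα0 : 0 ≤ α) (hα : α ≤ 1 / 2)
    (hnonneg : ∀ x y, 0 ≤ d x y) (htri : ∀ x y z, d x z ≤ d x y + d y z) (hd : d c c = 0)
    (hunan : ∀ i (z : ι → U), (∀ j, j ≠ i → z j = c) → aggr i z = c) (i : ι) (y : U) :
    gcost d α s aggr i (fun _ => c) ≤ gcost d α s aggr i (Function.update (fun _ => c) i y) := by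
  have hagg : aggr i (Function.update (fun _ => c) i y) = c :=
    hunan i _ fun j hj => Function.update_of_ne hj _ _
  rw [gcost_const hd (fun i => hunan i _ fun _ _ => rfl), gcost, hagg, Function.update_self]
  calc α * d (s i) c ≤ α * d (s i) y + α * d y c := by rw [← mul_add]; gcongr; exact htri _ _ _
    _ ≤ α * d (s i) y + (1 - α) * d y c := by gcongr; exacts [hnonneg y c, by linarith]

end Consensus

section ThreePoints

def threePointDist (ε : ℝ) (x y : Fin 3) : ℝ :=
  if x = y then 0 else if (x = 1 ∧ y = 2) ∨ (x = 2 ∧ y = 1) then ε else 1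

variable {ε : ℝ}

theorem threePointDist_self (ε : ℝ) (x : Fin 3) : threePointDist ε x x = 0 := by
  simp [threePointDist]

theorem threePointDist_pos (hε : 0 < ε) {x y : Fin 3} (hxy : x ≠ y) :
    0 < threePointDist ε x y := by
  unfold threePointDist
  split_ifs <;> first | contradiction | positivity

theorem threePointDist_comm (ε : ℝ) (x y : Fin 3) :
    threePointDist ε x y = threePointDist ε y x := by
  fin_cases x <;> fin_cases y <;> simp [threePointDist]

theorem threePointDist_triangle (hε : 0 ≤ ε) (hε2 : ε ≤ 2) (x y z : Fin 3) :
    threePointDist ε x z ≤ threePointDist ε x y + threePointDist ε y z := by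
  fin_cases x <;> fin_cases y <;> fin_cases z <;> simp [threePointDist] <;> linarith

theorem threePointDist_nonneg (hε : 0 ≤ ε) (x y : Fin 3) : 0 ≤ threePointDist ε x y := by
  unfold threePointDist
  split_ifs <;> positivity

end ThreePoints

section Unanimity

variable {ι U : Type*} {a b : U}

open Classical in
noncomputable def unanimityAggr (a b : U) (i : ι) (x : ι → U) : U :=
  if ∀ j, j ≠ i → x j = b then b else a

theorem unanimityAggr_mem (a b : U) (i : ι) (x : ι → U) :
    unanimityAggr a b i x ∈ ({a, b} : Set U) := by
  unfold unanimityAggr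
  split_ifs <;> simp

theorem unanimityAggr_congr {i : ι} {x y : ι → U} (hxy : ∀ j, j ≠ i → x j = y j) :
    unanimityAggr a b i x = unanimityAggr a b i y := by
  have : (∀ j, j ≠ i → x j = b) ↔ (∀ j, j ≠ i → y j = b) :=
    forall₂_congr fun j hj => by rw [hxy j hj]
  classical
  unfold unanimityAggr
  exact if_congr this rfl rfl

theorem unanimityAggr_of_forall_ne [Nontrivial ι] (hab : a ≠ b) {i : ι} {z : ι → U} {x : U}
    (hx : x ∈ ({a, b} : Set U)) (hz : ∀ j, j ≠ i → z j = x) : unanimityAggr a b i z = x := by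
  obtain ⟨j, hj⟩ := exists_ne i
  rcases hx with rfl | rfl
  · exact if_neg fun h => hab ((hz j hj).symm.trans (h j hj))
  · exact if_pos hz

end Unanimity

/-- for `α ∈ (0, 1/2]` there are restricted instances (on the universe
`{a, b, s} = Fin 3`, strategy space `Z = {a, b}`, all preferred strategies equal to `s`)
whose price of anarchy exceeds any bound `B`: there is an equilibrium `e` and a state `z`
with `0 < SUM(z)` and `B * SUM(z) ≤ SUM(e)`. -/
theorem stmt_17 (α : ℝ) (hα0 : 0 < α) (hα : α ≤ 1/2) (n : ℕ) (hn : 2 ≤ n) (B : ℝ) :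
    ∃ (d : Fin 3 → Fin 3 → ℝ) (Z : Set (Fin 3)) (s : Fin n → Fin 3)
      (aggr : Fin n → (Fin n → Fin 3) → Fin 3),
      -- `d` is a metric on the universe `Fin 3`
      (∀ x, d x x = 0) ∧ (∀ x y, x ≠ y → 0 < d x y) ∧
      (∀ x y, d x y = d y x) ∧ (∀ x y z, d x z ≤ d x y + d y z) ∧
      -- the instance is restricted: no preferred strategy lies in `Z`
      Z = {0, 1} ∧ (∀ i, s i ∉ Z) ∧
      -- the aggregation function is feasible
      (∀ i x, aggr i x ∈ Z) ∧
      (∀ i (x y : Fin n → Fin 3), (∀ j, j ≠ i → x j = y j) → aggr i x = aggr i y) ∧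
      (∀ i (z : Fin n → Fin 3) (x : Fin 3), x ∈ Z → (∀ j, j ≠ i → z j = x) → aggr i z = x) ∧
      -- an equilibrium `e` and a state `z` witnessing an unbounded PoA ratio
      ∃ e z : Fin n → Fin 3, (∀ i, e i ∈ Z) ∧ (∀ i, z i ∈ Z) ∧
        (∀ i, ∀ y ∈ Z, gcost d α s aggr i e ≤ gcost d α s aggr i (Function.update e i y)) ∧
        0 < (∑ i, gcost d α s aggr i z) ∧
        B * (∑ i, gcost d α s aggr i z) ≤ ∑ i, gcost d α s aggr i e := by
  have : Nontrivial (Fin n) := Fin.nontrivial_iff_two_le.mpr hn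
  set ε : ℝ := (max B 1)⁻¹
  have hε : 0 < ε := by positivity
  have hε1 : ε ≤ 1 := inv_le_one_of_one_le₀ (le_max_right _ _)
  have hBε : B * ε ≤ 1 := by
    calc B * ε ≤ max B 1 * ε := by gcongr; exact le_max_left _ _
      _ = 1 := mul_inv_cancel₀ (by positivity)
  have hunan : ∀ i (z : Fin n → Fin 3) (x : Fin 3), x ∈ ({0, 1} : Set (Fin 3)) →
      (∀ j, j ≠ i → z j = x) → unanimityAggr 0 1 i z = x :=
    fun _ _ _ => unanimityAggr_of_forall_ne (by decide)
  have hconsensus (c : Fin 3) (hc : c ∈ ({0, 1} : Set (Fin 3))) :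
      ∑ i : Fin n, gcost (threePointDist ε) α (fun _ => 2) (unanimityAggr 0 1) i (fun _ => c) =
        α * (n * threePointDist ε 2 c) := by
    rw [sum_gcost_const (threePointDist_self ε c) fun i => hunan i _ c hc fun _ _ => rfl]
    simp
  have hd21 : threePointDist ε 2 1 = ε := by simp [threePointDist]
  have hd20 : threePointDist ε 2 0 = 1 := by simp [threePointDist]
  have hn0 : (0 : ℝ) < n := by exact_mod_cast (by omega : 0 < n)
  refine ⟨threePointDist ε, {0, 1}, fun _ => 2, unanimityAggr 0 1, threePointDist_self ε,
    fun _ _ => threePointDist_pos hε, threePointDist_comm ε,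
    threePointDist_triangle hε.le (by linarith), rfl, by simp, unanimityAggr_mem 0 1,
    fun _ _ _ => unanimityAggr_congr, hunan, fun _ => 0, fun _ => 1, by simp, by simp,
    fun i y _ => gcost_const_le_gcost_update hα0.le hα (threePointDist_nonneg hε.le)
      (threePointDist_triangle hε.le (by linarith)) (threePointDist_self ε 0)
      (fun i z => hunan i z 0 (by simp)) i y, ?_, ?_⟩
  · rw [hconsensus 1 (by simp), hd21]
    positivity
  · rw [hconsensus 1 (by simp), hconsensus 0 (by simp), hd21, hd20]
    calc B * (α * (n * ε)) = α * n * (B * ε) := by ring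
      _ ≤ α * n * 1 := by gcongr
      _ = α * (n * 1) := by ring
end
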